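/- arXiv:2112.10921 — 3 statements merged into one kernel-verified Lean document; each statement's English description precedes it below -/
import Mathlib

section
/- Let $T \subset \mathbb{R}^2$ be a finitely generated additive subgroup of rank at least three. If every subgroup $T' \subset T$ of corank one spans $\mathbb{R}^2$ as a real vector space, then $T$ is dense in $\mathbb{R}^2$. -/
/-!
A discrete subgroup of `ℝ²` has rank at most two, so `T` has nonzero elements `tₙ → 0`. A limit
`u` of their directions spans a line `ℝ u` in the closure of `T`, because the multiples
`⌊r / ‖tₙ‖⌋ • tₙ ∈ T` approach `r • u`. Let `f` be a linear form with kernel `ℝ u`; the subgroup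
`f(T) ⊆ ℝ` is dense or cyclic. If it is dense, the closed subgroup `closure T` contains `ker f`,
so it is the preimage of the closed dense set `f(closure T)`, that is, of `ℝ`. If it is cyclic,
`T ∩ ker f` has corank at most one in `T`, so it contains a corank-one subgroup of `T`, whose
span lies in the line `ker f`.
-/

open Module Filter Topology

theorem tendsto_intFloor_div_mul {ι : Type*} {l : Filter ι} {ε : ι → ℝ}
    (hε : Tendsto ε l (𝓝[>] 0)) (r : ℝ) :
    Tendsto (fun i => (⌊r / ε i⌋ : ℝ) * ε i) l (𝓝 r) := by
  have hpos : ∀ᶠ i in l, 0 < ε i := (tendsto_nhdsWithin_iff.1 hε).2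
  refine tendsto_of_tendsto_of_tendsto_of_le_of_le' (g := fun i => r - ε i) ?_
    tendsto_const_nhds ?_ ?_
  · simpa using tendsto_const_nhds.sub (tendsto_nhds_of_tendsto_nhdsWithin hε)
  · filter_upwards [hpos] with i hi
    have := Int.lt_floor_add_one (r / ε i)
    rw [div_lt_iff₀ hi] at this
    linarith
  · filter_upwards [hpos] with i hi
    exact (le_div_iff₀ hi).1 (Int.floor_le _)

section Normed

variable {E : Type*} [NormedAddCommGroup E]

theorem AddSubgroup.exists_mem_ne_zero_norm_lt_of_not_discreteTopology
    (T : AddSubgroup E) (hT : ¬DiscreteTopology T) {ε : ℝ} (hε : 0 < ε) :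
    ∃ t ∈ T, t ≠ 0 ∧ ‖t‖ < ε := by
  rw [discreteTopology_iff_isOpen_singleton_zero, Metric.isOpen_singleton_iff] at hT
  push Not at hT
  obtain ⟨⟨t, htT⟩, ht, ht0⟩ := hT ε hε
  exact ⟨t, htT, by simpa using ht0, by simpa using ht⟩

variable [NormedSpace ℝ E]

theorem AddSubgroup.finrank_le_of_discreteTopology [FiniteDimensional ℝ E] (T : AddSubgroup E)
    [DiscreteTopology T] : finrank ℤ T ≤ finrank ℝ E := by
  have hspan : Submodule.span ℤ (T : Set E) = T.toIntSubmodule :=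
    Submodule.span_eq T.toIntSubmodule
  have hdisc : DiscreteTopology (Submodule.span ℤ (T : Set E)) := by rwa [hspan]
  calc finrank ℤ T = Set.finrank ℤ (T : Set E) := by rw [Set.finrank, hspan]; rfl
    _ = Set.finrank ℝ (T : Set E) := (Real.finrank_eq_int_finrank_of_discrete hdisc).symm
    _ ≤ finrank ℝ E := Submodule.finrank_le _

theorem AddSubgroup.exists_ne_zero_forall_smul_mem_topologicalClosure [ProperSpace E]
    (T : AddSubgroup E) (hT : ¬DiscreteTopology T) :
    ∃ u : E, u ≠ 0 ∧ ∀ r : ℝ, r • u ∈ T.topologicalClosure := by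
  choose t htT ht0 ht using fun n : ℕ =>
    T.exists_mem_ne_zero_norm_lt_of_not_discreteTopology hT (Nat.one_div_pos_of_nat (n := n))
  have ht_lim : Tendsto (fun n => ‖t n‖) atTop (𝓝[>] 0) := by
    refine tendsto_nhdsWithin_iff.2 ⟨?_, .of_forall fun n => norm_pos_iff.2 (ht0 n)⟩
    exact squeeze_zero (fun n => norm_nonneg _) (fun n => (ht n).le)
      tendsto_one_div_add_atTop_nhds_zero_nat
  obtain ⟨u, hu, φ, hφ, hlim⟩ := (isCompact_sphere (0 : E) 1).tendsto_subseq
    (x := fun n => ‖t n‖⁻¹ • t n) fun n => by simp [norm_smul, ht0]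
  refine ⟨u, ne_zero_of_mem_unit_sphere ⟨u, hu⟩, fun r => ?_⟩
  rw [← SetLike.mem_coe, T.topologicalClosure_coe]
  refine mem_closure_of_tendsto
    ((tendsto_intFloor_div_mul (ht_lim.comp hφ.tendsto_atTop) r).smul hlim)
    (.of_forall fun n => ?_)
  have hn : ‖t (φ n)‖ ≠ 0 := norm_ne_zero_iff.2 (ht0 _)
  simp only [Function.comp, smul_smul, mul_assoc, mul_inv_cancel₀ hn, mul_one,
    Int.cast_smul_eq_zsmul]
  exact T.zsmul_mem (htT _) _

end Normed

theorem AddSubgroup.dense_of_dense_map {E F : Type*} [AddGroup E] [TopologicalSpace E]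
    [IsTopologicalAddGroup E] [AddGroup F] [TopologicalSpace F] (T : AddSubgroup E) {f : E →+ F}
    (hf : IsQuotientMap f) (hker : f.ker ≤ T.topologicalClosure) (hd : Dense (T.map f : Set F)) :
    Dense (T : Set E) := by
  set H := T.topologicalClosure
  have hsat : f ⁻¹' (f '' H) = H := by
    refine (Set.subset_preimage_image _ _).antisymm' ?_
    rintro x ⟨h, hh, hfx⟩
    have : -h + x ∈ H := hker (by simp [hfx])
    simpa using H.add_mem hh this
  have hclosed : IsClosed (f '' H) := by
    rw [← hf.isCoinducing.isClosed_preimage, hsat]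
    exact T.isClosed_topologicalClosure
  have huniv : f '' H = Set.univ := by
    rw [← hclosed.closure_eq]
    exact (hd.mono (Set.image_mono (SetLike.coe_subset_coe.2 T.le_topologicalClosure))).closure_eq
  rw [dense_iff_closure_eq, ← T.topologicalClosure_coe, ← hsat, huniv, Set.preimage_univ]

theorem Submodule.exists_le_finrank_eq {R M : Type*} [Ring R] [Nontrivial R]
    [StrongRankCondition R] [AddCommGroup M] [Module R M] (N : Submodule R M) {n : ℕ}
    (hn : n ≤ finrank R N) : ∃ N' ≤ N, finrank R N' = n := by
  obtain ⟨v, hv⟩ := exists_linearIndependent_of_le_finrank hn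
  refine ⟨Submodule.span R (Set.range (N.subtype ∘ v)), Submodule.span_le.2 ?_, ?_⟩
  · rintro _ ⟨i, rfl⟩
    exact (v i).2
  · rw [finrank_span_eq_card (hv.map' N.subtype N.ker_subtype), Fintype.card_fin]

theorem Submodule.exists_dual_ker_eq {K V : Type*} [Field K] [AddCommGroup V] [Module K V]
    [FiniteDimensional K V] {p : Submodule K V} (hp : finrank K p + 1 = finrank K V) :
    ∃ f : Dual K V, f ≠ 0 ∧ LinearMap.ker f = p := by
  have hlt : p < ⊤ := by
    refine lt_top_iff_ne_top.2 fun h => ?_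
    rw [h, finrank_top] at hp
    omega
  obtain ⟨f, hf, hle⟩ := p.exists_le_ker_of_lt_top hlt
  refine ⟨f, hf, (Submodule.eq_of_le_of_finrank_eq hle ?_).symm⟩
  have := Dual.finrank_ker_add_one_of_ne_zero hf
  omega

theorem AddSubgroup.exists_le_ker_finrank_eq_sub_one {G H : Type*} [AddCommGroup G]
    [AddCommGroup H] (T : AddSubgroup G) (hT : T.FG) (f : G →+ H) {a : H}
    (ha : T.map f = AddSubgroup.closure {a}) :
    ∃ T' ≤ T, T' ≤ f.ker ∧ finrank ℤ T' = finrank ℤ T - 1 := by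
  have : Module.Finite ℤ T :=
    Module.Finite.iff_addGroup_fg.2 ((AddGroup.fg_iff_addSubgroup_fg T).2 hT)
  let ψ : T →ₗ[ℤ] H := (f.domRestrict T).toIntLinearMap
  have hrange : finrank ℤ (LinearMap.range ψ) ≤ 1 := by
    have : LinearMap.range ψ = Submodule.span ℤ {a} := by
      rw [← AddSubgroup.toIntSubmodule_closure, ← ha, ← f.domRestrict_range]
      rfl
    rw [this]
    simpa using finrank_span_le_card (R := ℤ) ({a} : Set H)
  have hker : finrank ℤ T - 1 ≤ finrank ℤ (LinearMap.ker ψ) := by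
    have := (LinearMap.ker ψ).finrank_quotient_add_finrank
    rw [ψ.quotKerEquivRange.finrank_eq] at this
    omega
  obtain ⟨N, hN, hNrk⟩ := (LinearMap.ker ψ).exists_le_finrank_eq hker
  refine ⟨N.toAddSubgroup.map T.subtype, AddSubgroup.map_subtype_le _, ?_, ?_⟩
  · rintro _ ⟨x, hx, rfl⟩
    exact hN hx
  · rw [← hNrk]
    exact (N.toAddSubgroup.equivMapOfInjective _ T.subtype_injective).toIntLinearEquiv.finrank_eq
      |>.symm

/-- Lemma 4.7: a finitely generated subgroup `T ⊆ ℝ²` of rank at least three,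
all of whose corank-one subgroups span `ℝ²` over `ℝ`, is dense in `ℝ²`. -/
theorem stmt_0 (T : AddSubgroup (ℝ × ℝ)) (hfg : T.FG)
    (hrk : 3 ≤ Module.finrank ℤ T)
    (hspan : ∀ T' : AddSubgroup (ℝ × ℝ), T' ≤ T →
      Module.finrank ℤ T' = Module.finrank ℤ T - 1 →
      Submodule.span ℝ (T' : Set (ℝ × ℝ)) = ⊤) :
    Dense (T : Set (ℝ × ℝ)) := by
  have hT : ¬DiscreteTopology T := fun _ => by
    have := T.finrank_le_of_discreteTopology
    simp only [finrank_prod, finrank_self] at this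
    omega
  obtain ⟨u, hu, hline⟩ := T.exists_ne_zero_forall_smul_mem_topologicalClosure hT
  obtain ⟨f, hf, hker⟩ := (ℝ ∙ u).exists_dual_ker_eq (by simp [finrank_span_singleton hu])
  let F : (ℝ × ℝ) →L[ℝ] ℝ := LinearMap.toContinuousLinearMap f
  have hF : Function.Surjective F := LinearMap.surjective hf
  rcases (T.map (F : (ℝ × ℝ) →+ ℝ)).dense_or_cyclic with hd | ⟨a, ha⟩
  · refine T.dense_of_dense_map ((F.isOpenMap hF).isQuotientMap F.continuous hF) ?_ hd
    intro x hx
    obtain ⟨r, rfl⟩ := Submodule.mem_span_singleton.1 (hker ▸ hx : x ∈ ℝ ∙ u)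
    exact hline r
  · obtain ⟨T', hT'T, hT'F, hT'rk⟩ := T.exists_le_ker_finrank_eq_sub_one hfg _ ha
    refine absurd (LinearMap.ker_eq_top.1 (top_le_iff.1 ?_)) hf
    rw [← hspan T' hT'T hT'rk, Submodule.span_le]
    exact hT'F
end

section
/- Let $W$ be a Hodge structure of K3 type that is M-special, and let $l \in W_{\mathbb{Z}} \cap (W^{2,0}\oplus W^{0,2})_{\mathbb{R}}$ be nonzero, with $\sigma \in W^{2,0}$ the unique element with $\mathrm{Re}\,\sigma = l$. Then there exists a real constant $\lambda$ such that $\mathrm{Re}(q(\sigma, v)) \in \mathbb{Z}$ for all $v \in W_{\mathbb{Z}}$; consequently the image of $W_{\mathbb{Z}}$ under $v \mapsto q(\sigma, v)$ is contained in $\{z \in \mathbb{C} : \mathrm{Re}(z) \in \mathbb{Z}\}$ and is not dense in $\mathbb{C}$. -/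
/-!
Because `l = Re σ` is integral, `Re q(σ, v) = q(l, v) ∈ ℤ` for every lattice vector `v`. This uses
that `q(·, v)` commutes with complex conjugation: it is real on the lattice, which consists of real
points and spans `W`. The complex numbers with integral real part form a proper closed subset of
`ℂ`, so the image of the lattice is not dense.
-/

open ComplexConjugate

section RealStructure

variable {W : Type*} [AddCommGroup W] [Module ℂ W] {c : W →ₗ[ℝ] W}

theorem LinearMap.apply_conj_of_span_eq_top (f : W →ₗ[ℂ] ℂ)
    (hcanti : ∀ (z : ℂ) (v : W), c (z • v) = conj z • c v)
    {S : Set W} (hS : Submodule.span ℂ S = ⊤) (hcS : ∀ s ∈ S, c s = s)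
    (hfS : ∀ s ∈ S, conj (f s) = f s) (x : W) :
    f (c x) = conj (f x) := by
  let g : W →ₗ[ℂ] ℂ :=
    { toFun := fun x => conj (f (c x))
      map_add' := fun x y => by simp only [map_add]
      map_smul' := fun z x => by simp [hcanti] }
  have hgf : g = f := LinearMap.ext_on hS fun s hs => by simp [g, hcS s hs, hfS s hs]
  simpa [g] using congrArg conj (LinearMap.congr_fun hgf x)

theorem LinearMap.re_apply_of_add_conj_eq_two_smul (f : W →ₗ[ℂ] ℂ) {σ l : W}
    (hf : f (c σ) = conj (f σ)) (hRe : σ + c σ = (2 : ℝ) • l) :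
    ((f σ).re : ℂ) = f l := by
  have h := congrArg f hRe
  rw [map_add, hf, Complex.add_conj, ← Complex.coe_smul, map_smul] at h
  push_cast at h
  linear_combination h / 2

end RealStructure

theorem Complex.not_dense_of_subset_re_mem_range_intCast {s : Set ℂ}
    (hs : s ⊆ {z : ℂ | ∃ n : ℤ, z.re = (n : ℝ)}) : ¬ Dense s := by
  intro hd
  have hclosed : IsClosed {z : ℂ | ∃ n : ℤ, z.re = (n : ℝ)} := by
    have := Int.isClosedEmbedding_coe_real.isClosed_range.preimage Complex.continuous_re
    convert this using 1
    ext z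
    simp [eq_comm]
  obtain ⟨n, hn⟩ : ∃ n : ℤ, (1 / 2 : ℂ).re = (n : ℝ) :=
    hclosed.closure_subset (hd.mono hs (1 / 2))
  norm_num at hn
  have h0 : (0 : ℝ) < n := by linarith
  have h1 : (n : ℝ) < 1 := by linarith
  norm_cast at h0 h1
  omega

theorem stmt_7_general {W : Type*} [AddCommGroup W] [Module ℂ W]
    -- real structure (complex conjugation)
    (c : W →ₗ[ℝ] W)
    (hcanti : ∀ (z : ℂ) (v : W), c (z • v) = (starRingEnd ℂ) z • c v)
    -- the integral lattice: full rank, contained in the real points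
    (WZ : AddSubgroup W)
    (hfix : ∀ v ∈ WZ, c v = v)
    (hspanZ : Submodule.span ℂ (WZ : Set W) = ⊤)
    -- the polarization, integral on the lattice
    (q : LinearMap.BilinForm ℂ W)
    (hint : ∀ v ∈ WZ, ∀ w ∈ WZ, ∃ n : ℤ, q v w = (n : ℂ))
    -- the M-special witness l and σ ∈ W^{2,0} with Re σ = l
    (l : W) (hlZ : l ∈ WZ)
    (σ : W) (hRe : σ + c σ = (2 : ℝ) • l) :
    (∀ v ∈ WZ, ∃ n : ℤ, (q σ v).re = (n : ℝ)) ∧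
    ((fun v => q σ v) '' (WZ : Set W) ⊆ {z : ℂ | ∃ n : ℤ, z.re = (n : ℝ)}) ∧
    ¬ Dense ((fun v => q σ v) '' (WZ : Set W)) := by
  have hre : ∀ v ∈ WZ, ∃ n : ℤ, (q σ v).re = (n : ℝ) := by
    intro v hv
    have hconj := LinearMap.apply_conj_of_span_eq_top (q.flip v) hcanti hspanZ hfix fun x hx => by
      obtain ⟨m, hm⟩ := hint x hx v hv
      simp [hm]
    obtain ⟨n, hn⟩ := hint l hlZ v hv
    refine ⟨n, Complex.ofReal_injective ?_⟩
    simpa [hn] using LinearMap.re_apply_of_add_conj_eq_two_smul (q.flip v) (hconj σ) hRe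
  have himage : (fun v => q σ v) '' (WZ : Set W) ⊆ {z : ℂ | ∃ n : ℤ, z.re = (n : ℝ)} := by
    rintro _ ⟨v, hv, rfl⟩
    exact hre v hv
  exact ⟨hre, himage, Complex.not_dense_of_subset_re_mem_range_intCast himage⟩

/-- Direction (1) ⟹ (2) of Theorem 4.6: if `W` is M-special with integral
witness `l = Re σ`, `σ ∈ W^{2,0}`, and `q` is integral on the lattice, then
`Re (q(σ,v)) ∈ ℤ` for all lattice vectors `v`; consequently the image of the
lattice under `v ↦ q(σ,v)` lies in `{z : Re z ∈ ℤ}` and is not dense in `ℂ`. -/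
theorem stmt_7 {W : Type*} [AddCommGroup W] [Module ℂ W] [FiniteDimensional ℂ W]
    -- real structure (complex conjugation)
    (c : W →ₗ[ℝ] W)
    (hc2 : ∀ v, c (c v) = v)
    (hcanti : ∀ (z : ℂ) (v : W), c (z • v) = (starRingEnd ℂ) z • c v)
    -- Hodge decomposition of K3 type
    (W20 W11 W02 : Submodule ℂ W)
    (hdec : W20 ⊔ W11 ⊔ W02 = ⊤)
    (hd1 : (W20 ⊔ W02) ⊓ W11 = ⊥) (hd2 : W20 ⊓ W02 = ⊥)
    (h20 : Module.finrank ℂ W20 = 1) (h02 : Module.finrank ℂ W02 = 1)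
    (hc20 : ∀ v ∈ W20, c v ∈ W02) (hc02 : ∀ v ∈ W02, c v ∈ W20)
    (hc11 : ∀ v ∈ W11, c v ∈ W11)
    -- the integral lattice: full rank, contained in the real points
    (WZ : AddSubgroup W) (hfg : WZ.FG)
    (hfix : ∀ v ∈ WZ, c v = v)
    (hrank : Module.finrank ℤ WZ = Module.finrank ℂ W)
    (hspanZ : Submodule.span ℂ (WZ : Set W) = ⊤)
    -- the polarization, integral on the lattice
    (q : LinearMap.BilinForm ℂ W) (hsymm : ∀ v w, q v w = q w v)
    (hint : ∀ v ∈ WZ, ∀ w ∈ WZ, ∃ n : ℤ, q v w = (n : ℂ))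
    (horth : ∀ v ∈ W11, ∀ w ∈ W20 ⊔ W02, q v w = 0)
    (hpos : ∀ v ∈ W20 ⊔ W02, c v = v → v ≠ 0 → ∃ r : ℝ, 0 < r ∧ q v v = (r : ℂ))
    -- the M-special witness l and σ ∈ W^{2,0} with Re σ = l
    (l : W) (hlZ : l ∈ WZ) (hl0 : l ≠ 0) (hl : l ∈ W20 ⊔ W02)
    (σ : W) (hσ : σ ∈ W20) (hRe : σ + c σ = (2 : ℝ) • l) :
    (∀ v ∈ WZ, ∃ n : ℤ, (q σ v).re = (n : ℝ)) ∧
    ((fun v => q σ v) '' (WZ : Set W) ⊆ {z : ℂ | ∃ n : ℤ, z.re = (n : ℝ)}) ∧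
    ¬ Dense ((fun v => q σ v) '' (WZ : Set W)) :=
  stmt_7_general c hcanti WZ hfix hspanZ q hint l hlZ σ hRe
end

section
/- Let $U \subset W$ be a Hodge substructure of a polarized Hodge structure $W$ of weight 2 such that $q|_U$ is nondegenerate and $U^{0,2} = W^{0,2}$. Then $W$ is M-special if and only if $U$ is M-special, and $W$ has maximal Picard rank if and only if $U$ does. -/
/-!
Complex conjugation fixes the rational points, hence preserves every subspace spanned by rational
vectors, such as `U`; as it swaps `W^{2,0}` and `W^{0,2}`, also `W^{2,0} ⊆ U`, so `U` and `W`
have the same `(2,0) + (0,2)` part. Nondegeneracy of `q|_U` gives `W = U ⊕ U^⊥`, and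
`U^⊥ ⊆ W^{1,1}`: the `(2,0) + (0,2)` component of a vector of `U^⊥` is orthogonal to all of `W`,
and lies in `U`. By the modular law `W^{1,1} = (W^{1,1} ∩ U) ⊕ U^⊥`.

Rationality of `W^{1,1}` then transfers in both directions: sums of rational subspaces are
rational, and so are intersections and the orthogonal of `U` for the rational form `q`, by counting
dimensions. The count works because `span ℚ WZ` is a `ℚ`-form of `W`: it spans `W` and has
dimension at most `rank WZ = dim W`, so `ℚ`-independent rational vectors stay `ℂ`-independent.
-/

open Module Submodule

section Lattice

variable {W : Type*} [AddCommGroup W] [Module ℚ W] (L : AddSubgroup W) [Module.Finite ℤ L]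

theorem AddSubgroup.exists_finset_linearIndepOn_span_rat_eq :
    ∃ b : Finset W, span ℚ (b : Set W) = span ℚ (L : Set W) ∧
      LinearIndepOn ℚ id (b : Set W) ∧ b.card ≤ finrank ℤ L := by
  obtain ⟨b, hbL, hspan, hli⟩ := exists_linearIndependent ℚ (L : Set W)
  have hliZ : LinearIndependent ℤ (fun x : b => (⟨x, hbL x.2⟩ : L)) :=
    LinearIndependent.of_comp L.subtype.toIntLinearMap (hli.restrict_scalars' ℤ)
  have : Finite b := hliZ.finite
  have : Fintype b := Fintype.ofFinite b
  refine ⟨b.toFinset, by simpa using hspan, by rw [Set.coe_toFinset]; exact hli, ?_⟩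
  simpa using hliZ.fintype_card_le_finrank

theorem AddSubgroup.finiteDimensional_span_rat : FiniteDimensional ℚ (span ℚ (L : Set W)) := by
  obtain ⟨b, hb, -, -⟩ := L.exists_finset_linearIndepOn_span_rat_eq
  rw [← hb]
  exact FiniteDimensional.span_finset ℚ b

theorem AddSubgroup.finrank_span_rat_le : finrank ℚ (span ℚ (L : Set W)) ≤ finrank ℤ L := by
  obtain ⟨b, hb, hli, hcard⟩ := L.exists_finset_linearIndepOn_span_rat_eq
  rwa [← hb, finrank_span_finset_eq_card hli]

end Lattice

section DefinedOver

variable {F E W : Type*} [Field F] [Field E] [AddCommGroup W] [Module F W] [Module E W]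

def Submodule.IsDefinedOver (S : Submodule E W) (K : Submodule F W) : Prop :=
  S = span E ((K : Set W) ∩ S)

theorem Submodule.IsDefinedOver.sup {K : Submodule F W} {S T : Submodule E W}
    (hS : S.IsDefinedOver K) (hT : T.IsDefinedOver K) : (S ⊔ T).IsDefinedOver K := by
  refine le_antisymm (sup_le ?_ ?_) (span_le.mpr Set.inter_subset_right)
  · exact hS.le.trans <| span_mono <|
      Set.inter_subset_inter_right _ (SetLike.coe_subset_coe.mpr le_sup_left)
  · exact hT.le.trans <| span_mono <|
      Set.inter_subset_inter_right _ (SetLike.coe_subset_coe.mpr le_sup_right)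

theorem Submodule.IsDefinedOver.apply_mem {K : Submodule F W} {S : Submodule E W}
    (c : W →+ W) {σ : E → E} (hcσ : ∀ (z : E) v, c (z • v) = σ z • c v)
    (hc : ∀ v ∈ K, c v = v) (hS : S.IsDefinedOver K) {v : W} (hv : v ∈ S) : c v ∈ S := by
  rw [hS] at hv
  induction hv using span_induction with
  | mem x hx => rw [hc x hx.1]; exact hx.2
  | zero => rw [map_zero]; exact S.zero_mem
  | add x y _ _ hx hy => rw [map_add]; exact S.add_mem hx hy
  | smul z x _ hx => rw [hcσ]; exact S.smul_mem _ hx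

variable [Algebra F E] [IsScalarTower F E W]

theorem finrank_span_le_finrank (S : Submodule F W) [FiniteDimensional F S] :
    finrank E (span E (S : Set W)) ≤ finrank F S := by
  have hrange : span E (S : Set W) = LinearMap.range (S.subtype.liftBaseChange E) := by simp
  rw [hrange, ← finrank_baseChange (R := E) (S := F) (M' := S)]
  exact LinearMap.finrank_range_le _

theorem finrank_span_eq_finrank_of_le [FiniteDimensional E W] {K : Submodule F W}
    [FiniteDimensional F K] (hK : span E (K : Set W) = ⊤) (hKrank : finrank F K ≤ finrank E W)
    {S : Submodule F W} (hSK : S ≤ K) : finrank E (span E (S : Set W)) = finrank F S := by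
  obtain ⟨T, hST, hsup⟩ := IsModularLattice.exists_disjoint_and_sup_eq hSK
  have : FiniteDimensional F S := finiteDimensional_of_le hSK
  have : FiniteDimensional F T := finiteDimensional_of_le (hsup ▸ le_sup_right)
  have htop : span E (S : Set W) ⊔ span E (T : Set W) = ⊤ := by
    rw [eq_top_iff, ← hK, span_le]
    intro x hx
    rw [SetLike.mem_coe, ← hsup] at hx
    obtain ⟨s, hs, t, ht, rfl⟩ := mem_sup.mp hx
    exact add_mem (mem_sup_left (subset_span hs)) (mem_sup_right (subset_span ht))
  have hdimF := finrank_sup_add_finrank_inf_eq S T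
  have hdimE := finrank_add_le_finrank_add_finrank (span E (S : Set W)) (span E (T : Set W))
  rw [htop, finrank_top] at hdimE
  rw [hST.eq_bot, finrank_bot, hsup] at hdimF
  have := finrank_span_le_finrank (E := E) S
  have := finrank_span_le_finrank (E := E) T
  omega

theorem finrank_eq_of_span_eq_top [FiniteDimensional E W] {K : Submodule F W}
    [FiniteDimensional F K] (hK : span E (K : Set W) = ⊤) (hKrank : finrank F K ≤ finrank E W) :
    finrank F K = finrank E W := by
  rw [← finrank_span_eq_finrank_of_le hK hKrank le_rfl, hK, finrank_top]

namespace Submodule.IsDefinedOver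

variable [FiniteDimensional E W] {K : Submodule F W} [FiniteDimensional F K] {S T : Submodule E W}

theorem finrank_eq (hK : span E (K : Set W) = ⊤) (hKrank : finrank F K ≤ finrank E W)
    (hS : S.IsDefinedOver K) : finrank F ↥(K ⊓ S.restrictScalars F) = finrank E S :=
  (finrank_span_eq_finrank_of_le hK hKrank inf_le_left).symm.trans
    (congrArg (fun T : Submodule E W => finrank E T) hS).symm

theorem of_finrank_le (hK : span E (K : Set W) = ⊤) (hKrank : finrank F K ≤ finrank E W)
    (h : finrank E S ≤ finrank F ↥(K ⊓ S.restrictScalars F)) : S.IsDefinedOver K := by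
  refine (eq_of_le_of_finrank_le (span_le.mpr Set.inter_subset_right) ?_).symm
  exact h.trans (finrank_span_eq_finrank_of_le hK hKrank inf_le_left).ge

theorem inf (hK : span E (K : Set W) = ⊤) (hKrank : finrank F K ≤ finrank E W)
    (hS : S.IsDefinedOver K) (hT : T.IsDefinedOver K) : (S ⊓ T).IsDefinedOver K := by
  set SK := K ⊓ S.restrictScalars F
  set TK := K ⊓ T.restrictScalars F
  have hSTK : span E ((SK ⊔ TK : Submodule F W) : Set W) = S ⊔ T := by
    rw [← span_eq SK, ← span_eq TK, ← span_union, span_span_of_tower, span_union]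
    exact congrArg₂ (· ⊔ ·) hS.symm hT.symm
  have h1 :=
    finrank_span_eq_finrank_of_le (S := SK ⊔ TK) hK hKrank (sup_le inf_le_left inf_le_left)
  rw [hSTK] at h1
  have h2 := finrank_sup_add_finrank_inf_eq SK TK
  have h3 := finrank_sup_add_finrank_inf_eq S T
  have h4 : SK ⊓ TK = K ⊓ (S ⊓ T).restrictScalars F := by
    ext; simp only [SK, TK, mem_inf, restrictScalars_mem]; tauto
  rw [hS.finrank_eq hK hKrank, hT.finrank_eq hK hKrank, h4] at h2
  exact of_finrank_le hK hKrank (by omega)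

end Submodule.IsDefinedOver

theorem finrank_le_finrank_inf_ker_add_card [FiniteDimensional E W] {K : Submodule F W}
    [FiniteDimensional F K] (hK : span E (K : Set W) = ⊤) (hKrank : finrank F K ≤ finrank E W)
    {ι : Type*} [Fintype ι] (f : W →ₗ[E] ι → E)
    (hf : ∀ k ∈ K, ∀ i, f k i ∈ (⊥ : Subalgebra F E)) :
    finrank E W ≤ finrank F ↥(K ⊓ (LinearMap.ker f).restrictScalars F) + Fintype.card ι := by
  let g : K →ₗ[F] ι → E := f.restrictScalars F ∘ₗ K.subtype
  have hrange : LinearMap.range g ≤ LinearMap.range ((Algebra.linearMap F E).compLeft ι) := by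
    rintro _ ⟨k, rfl⟩
    choose r hr using fun i => Algebra.mem_bot.mp (hf k k.2 i)
    exact ⟨r, funext hr⟩
  have hker : (LinearMap.ker g).map K.subtype ≤ K ⊓ (LinearMap.ker f).restrictScalars F := by
    rintro _ ⟨k, hk, rfl⟩
    exact ⟨k.2, hk⟩
  have hrank := LinearMap.finrank_range_add_finrank_ker g
  have hrange_le := (finrank_mono hrange).trans (LinearMap.finrank_range_le _)
  have hker_le := finrank_mono hker
  rw [finrank_map_subtype_eq] at hker_le
  rw [finrank_fintype_fun_eq_card] at hrange_le
  have := finrank_eq_of_span_eq_top hK hKrank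
  omega

theorem LinearMap.BilinForm.apply_mem_bot_of_mem_span {q : LinearMap.BilinForm E W} {s : Set W}
    (hs : ∀ v ∈ s, ∀ w ∈ s, q v w ∈ (⊥ : Subalgebra F E)) :
    ∀ v ∈ span F s, ∀ w ∈ span F s, q v w ∈ (⊥ : Subalgebra F E) := by
  have hmap₂ : map₂ (q.restrictScalars₁₂ F F) (span F s) (span F s) ≤
      Subalgebra.toSubmodule ⊥ := by
    rw [map₂_span_span, span_le]
    rintro _ ⟨v, hv, w, hw, rfl⟩
    exact hs v hv w hw
  exact fun v hv w hw => hmap₂ (apply_mem_map₂ _ hv hw)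

theorem Submodule.IsDefinedOver.orthogonal [FiniteDimensional E W] {K : Submodule F W}
    [FiniteDimensional F K] (hK : span E (K : Set W) = ⊤) (hKrank : finrank F K ≤ finrank E W)
    {q : LinearMap.BilinForm E W} (hq : ∀ v ∈ K, ∀ w ∈ K, q v w ∈ (⊥ : Subalgebra F E))
    {U : Submodule E W} (hU : U.IsDefinedOver K) (hUq : IsCompl U (q.orthogonal U)) :
    (q.orthogonal U).IsDefinedOver K := by
  set UK := K ⊓ U.restrictScalars F
  let b := Module.finBasis F UK
  let f : W →ₗ[E] Fin (finrank F UK) → E := LinearMap.pi fun i => q (b i)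
  have hker : LinearMap.ker f ≤ q.orthogonal U := by
    intro w hw
    have hb : (q.flip w).restrictScalars F ∘ₗ UK.subtype = 0 :=
      b.ext fun i => by simpa [f] using congrFun hw i
    have hUw : U ≤ LinearMap.ker (q.flip w) := by
      rw [hU, span_le]
      exact fun u hu => LinearMap.congr_fun hb ⟨u, hu⟩
    exact fun u hu => hUw hu
  have hfK : ∀ k ∈ K, ∀ i, f k i ∈ (⊥ : Subalgebra F E) :=
    fun k hk i => hq _ (b i).2.1 k hk
  have hcard := finrank_le_finrank_inf_ker_add_card hK hKrank f hfK
  rw [Fintype.card_fin] at hcard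
  have hmono : finrank F ↥(K ⊓ (LinearMap.ker f).restrictScalars F) ≤
      finrank F ↥(K ⊓ (q.orthogonal U).restrictScalars F) :=
    finrank_mono (inf_le_inf_left _ (restrictScalars_mono F hker))
  have hUK : finrank F UK = finrank E U := hU.finrank_eq hK hKrank
  have hUU : finrank E U + finrank E (q.orthogonal U) = finrank E W :=
    finrank_add_eq_of_isCompl hUq
  exact of_finrank_le hK hKrank (by omega)

end DefinedOver

theorem LinearMap.BilinForm.orthogonal_le_of_sup_eq_top {R M : Type*} [CommRing R]
    [AddCommGroup M] [Module R M] {q : LinearMap.BilinForm R M} (hq : q.IsSymm)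
    {U P H : Submodule R M} (hU : Disjoint U (q.orthogonal U)) (hPU : P ≤ U) (hPH : P ⊔ H = ⊤)
    (hHP : ∀ h ∈ H, ∀ p ∈ P, q h p = 0) : q.orthogonal U ≤ H := by
  intro w hw
  obtain ⟨p, hp, h, hh, rfl⟩ := mem_sup.mp (hPH ▸ mem_top : w ∈ P ⊔ H)
  suffices p = 0 by rwa [this, zero_add]
  have hrad : ∀ x, q x p = 0 := by
    intro x
    obtain ⟨p', hp', h', hh', rfl⟩ := mem_sup.mp (hPH ▸ mem_top : x ∈ P ⊔ H)
    have hp'p : q p' p = 0 := by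
      have hp'w : q p' (p + h) = 0 := hw p' (hPU hp')
      rwa [map_add, hq.eq p' h, hHP h hh p' hp', add_zero] at hp'w
    rw [map_add, LinearMap.add_apply, hp'p, hHP h' hh' p hp, add_zero]
  exact disjoint_def.mp hU p (hPU hp) fun u _ => hrad u

theorem LinearMap.BilinForm.inf_sup_orthogonal_eq_of_sup_eq_top {R M : Type*} [CommRing R]
    [AddCommGroup M] [Module R M] {q : LinearMap.BilinForm R M} (hq : q.IsSymm)
    {U P H : Submodule R M} (hU : IsCompl U (q.orthogonal U)) (hPU : P ≤ U) (hPH : P ⊔ H = ⊤)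
    (hHP : ∀ h ∈ H, ∀ p ∈ P, q h p = 0) : H ⊓ U ⊔ q.orthogonal U = H :=
  calc H ⊓ U ⊔ q.orthogonal U = q.orthogonal U ⊔ U ⊓ H := by rw [sup_comm, inf_comm]
    _ = (q.orthogonal U ⊔ U) ⊓ H :=
      (sup_inf_assoc_of_le U (q.orthogonal_le_of_sup_eq_top hq hU.disjoint hPU hPH hHP)).symm
    _ = H := by rw [hU.symm.sup_eq_top, top_inf_eq]

theorem stmt_10_general {W : Type*} [AddCommGroup W] [Module ℂ W] [FiniteDimensional ℂ W]
    [Module ℚ W] [IsScalarTower ℚ ℂ W]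
    -- real structure (complex conjugation)
    (c : W →ₗ[ℝ] W)
    (hc2 : ∀ v, c (c v) = v)
    (hcanti : ∀ (z : ℂ) (v : W), c (z • v) = (starRingEnd ℂ) z • c v)
    -- weight-two Hodge decomposition
    (W20 W11 W02 : Submodule ℂ W)
    (hdec : W20 ⊔ W11 ⊔ W02 = ⊤)
    (hc20 : ∀ v ∈ W20, c v ∈ W02)
    -- the integral lattice: full rank, contained in the real points
    (WZ : AddSubgroup W) (hfg : WZ.FG)
    (hfix : ∀ v ∈ WZ, c v = v)
    (hrank : Module.finrank ℤ WZ = Module.finrank ℂ W)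
    (hspanZ : Submodule.span ℂ (WZ : Set W) = ⊤)
    -- the polarization
    (q : LinearMap.BilinForm ℂ W) (hsymm : ∀ v w, q v w = q w v)
    (hrat : ∀ v ∈ WZ, ∀ w ∈ WZ, ∃ r : ℚ, q v w = (r : ℂ))
    (horth1 : ∀ v ∈ W11, ∀ w ∈ W20 ⊔ W02, q v w = 0)
    -- U : rational Hodge substructure with q|_U nondegenerate, U^{0,2} = W^{0,2}
    (U : Submodule ℂ W)
    (hUrat : U = Submodule.span ℂ
      ((Submodule.span ℚ (WZ : Set W) : Set W) ∩ (U : Set W)))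
    (hUnd : ∀ v ∈ U, (∀ w ∈ U, q v w = 0) → v = 0)
    (hU02 : W02 ≤ U) :
    -- W is M-special iff U is M-special
    ((∃ v ∈ WZ, v ≠ 0 ∧ v ∈ W20 ⊔ W02) ↔
      (∃ v ∈ WZ, v ∈ U ∧ v ≠ 0 ∧ v ∈ (W20 ⊓ U) ⊔ (W02 ⊓ U))) ∧
    -- W has maximal Picard rank iff U has maximal Picard rank
    ((W11 = Submodule.span ℂ
        ((Submodule.span ℚ (WZ : Set W) : Set W) ∩ (W11 : Set W))) ↔
      (W11 ⊓ U = Submodule.span ℂ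
        ((Submodule.span ℚ (WZ : Set W) : Set W) ∩
          ((W11 ⊓ U : Submodule ℂ W) : Set W)))) := by
  have : Module.Finite ℤ WZ :=
    Module.Finite.iff_addGroup_fg.mpr ((AddGroup.fg_iff_addSubgroup_fg WZ).mpr hfg)
  set K := span ℚ (WZ : Set W)
  have : FiniteDimensional ℚ K := WZ.finiteDimensional_span_rat
  have hK : span ℂ (K : Set W) = ⊤ := by rw [span_span_of_tower, hspanZ]
  have hKrank : finrank ℚ K ≤ finrank ℂ W := hrank ▸ WZ.finrank_span_rat_le
  have hcK : ∀ v ∈ K, c v = v := fun v hv =>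
    LinearMap.eqOn_span (f := c.toAddMonoidHom.toRatLinearMap) (g := LinearMap.id) hfix hv
  have hU : U.IsDefinedOver K := hUrat
  have hW20U : W20 ≤ U := fun v hv =>
    hc2 v ▸ hU.apply_mem c.toAddMonoidHom hcanti hcK (hU02 (hc20 v hv))
  have hq : q.IsSymm := ⟨hsymm⟩
  have hUq : IsCompl U (q.orthogonal U) := (q.isCompl_orthogonal_iff_disjoint hq.isRefl).mpr <|
    disjoint_def.mpr fun v hvU hv => hUnd v hvU fun w hw => hsymm v w ▸ hv w hw
  have hPH : (W20 ⊔ W02) ⊔ W11 = ⊤ := by rwa [sup_right_comm]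
  have hW11 : W11 ⊓ U ⊔ q.orthogonal U = W11 :=
    q.inf_sup_orthogonal_eq_of_sup_eq_top hq hUq (sup_le hW20U hU02) hPH horth1
  refine ⟨?_, ⟨fun h => IsDefinedOver.inf hK hKrank h hU, fun h => ?_⟩⟩
  · rw [inf_eq_left.mpr hW20U, inf_eq_left.mpr hU02]
    exact ⟨fun ⟨v, hv, hv0, hvP⟩ => ⟨v, hv, sup_le hW20U hU02 hvP, hv0, hvP⟩,
      fun ⟨v, hv, _, hv0, hvP⟩ => ⟨v, hv, hv0, hvP⟩⟩
  · have hqK := LinearMap.BilinForm.apply_mem_bot_of_mem_span (F := ℚ) fun v hv w hw => by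
      obtain ⟨r, hr⟩ := hrat v hv w hw
      exact Algebra.mem_bot.mpr ⟨r, by rw [hr, eq_ratCast]⟩
    have := IsDefinedOver.sup h (hU.orthogonal hK hKrank hqK hUq)
    rwa [hW11] at this

/-- Lemma 4.8 (1): let `U ⊆ W` be a rational Hodge substructure of a polarized
weight-two Hodge structure with `q|_U` nondegenerate and `U^{0,2} = W^{0,2}`.
Then `W` is M-special iff `U` is, and `W` has maximal Picard rank iff `U`
does. -/
theorem stmt_10 {W : Type*} [AddCommGroup W] [Module ℂ W] [FiniteDimensional ℂ W]
    [Module ℚ W] [IsScalarTower ℚ ℂ W]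
    -- real structure (complex conjugation)
    (c : W →ₗ[ℝ] W)
    (hc2 : ∀ v, c (c v) = v)
    (hcanti : ∀ (z : ℂ) (v : W), c (z • v) = (starRingEnd ℂ) z • c v)
    -- weight-two Hodge decomposition
    (W20 W11 W02 : Submodule ℂ W)
    (hdec : W20 ⊔ W11 ⊔ W02 = ⊤)
    (hd1 : (W20 ⊔ W02) ⊓ W11 = ⊥) (hd2 : W20 ⊓ W02 = ⊥)
    (hc20 : ∀ v ∈ W20, c v ∈ W02) (hc02 : ∀ v ∈ W02, c v ∈ W20)
    (hc11 : ∀ v ∈ W11, c v ∈ W11)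
    -- the integral lattice: full rank, contained in the real points
    (WZ : AddSubgroup W) (hfg : WZ.FG)
    (hfix : ∀ v ∈ WZ, c v = v)
    (hrank : Module.finrank ℤ WZ = Module.finrank ℂ W)
    (hspanZ : Submodule.span ℂ (WZ : Set W) = ⊤)
    -- the polarization
    (q : LinearMap.BilinForm ℂ W) (hsymm : ∀ v w, q v w = q w v)
    (hrat : ∀ v ∈ WZ, ∀ w ∈ WZ, ∃ r : ℚ, q v w = (r : ℂ))
    (horth1 : ∀ v ∈ W11, ∀ w ∈ W20 ⊔ W02, q v w = 0)
    (horth2 : ∀ v ∈ W20, ∀ w ∈ W20, q v w = 0)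
    (horth3 : ∀ v ∈ W02, ∀ w ∈ W02, q v w = 0)
    -- U : rational Hodge substructure with q|_U nondegenerate, U^{0,2} = W^{0,2}
    (U : Submodule ℂ W)
    (hUrat : U = Submodule.span ℂ
      ((Submodule.span ℚ (WZ : Set W) : Set W) ∩ (U : Set W)))
    (hUdec : U = (W20 ⊓ U) ⊔ (W11 ⊓ U) ⊔ (W02 ⊓ U))
    (hUnd : ∀ v ∈ U, (∀ w ∈ U, q v w = 0) → v = 0)
    (hU02 : W02 ≤ U) :
    -- W is M-special iff U is M-special
    ((∃ v ∈ WZ, v ≠ 0 ∧ v ∈ W20 ⊔ W02) ↔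
      (∃ v ∈ WZ, v ∈ U ∧ v ≠ 0 ∧ v ∈ (W20 ⊓ U) ⊔ (W02 ⊓ U))) ∧
    -- W has maximal Picard rank iff U has maximal Picard rank
    ((W11 = Submodule.span ℂ
        ((Submodule.span ℚ (WZ : Set W) : Set W) ∩ (W11 : Set W))) ↔
      (W11 ⊓ U = Submodule.span ℂ
        ((Submodule.span ℚ (WZ : Set W) : Set W) ∩
          ((W11 ⊓ U : Submodule ℂ W) : Set W)))) :=
  stmt_10_general c hc2 hcanti W20 W11 W02 hdec hc20 WZ hfg hfix hrank hspanZ q hsymm hrat horth1 U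
    hUrat hUnd hU02
end
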